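/- arXiv:2311.10965 — 10 statements merged into one kernel-verified Lean document; each statement's English description precedes it below -/
import Mathlib

section
/- For any natural number k, any list l of elements of type X, and any comparison function le : X → X → bool, if k < length l, then there exist lists l1, l2 and an element v such that quickselect k l le = Some (l1, v, l2). -/
/-- `le` is transitive and total. -/
def le_props {X : Type} (le : X → X → Bool) : Prop :=
  (∀ a b c, le a b = true → le b c = true → le a c = true) ∧
  (∀ a b, le a b = true ∨ le b a = true)

/-- Fueled quickselect. -/
def qsp {X : Type} : Nat → Nat → List X → (X → X → Bool) → Option (List X × X × List X)
  | 0, _, _, _ => none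
  | steps + 1, k, l, le =>
    match l with
    | [] => none
    | pivot :: lst =>
      let sm := lst.filter (fun x => le x pivot && !le pivot x)
      let eq := lst.filter (fun x => le x pivot && le pivot x)
      let lg := lst.filter (fun x => !le x pivot)
      if k < sm.length then
        match qsp steps k sm le with
        | none => none
        | some (a, x, b) => some (a, x, b ++ ((pivot :: eq) ++ lg))
      else if sm.length + eq.length < k then
        match qsp steps (k - (sm.length + eq.length + 1)) lg le with
        | none => none
        | some (a, x, b) => some (a ++ (sm ++ (pivot :: eq)), x, b)
      else
        some (sm ++ eq.take (k - sm.length), pivot, eq.drop (k - sm.length) ++ lg)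

def quick_select {X : Type} (k : Nat) (l : List X) (le : X → X → Bool) :
    Option (List X × X × List X) :=
  qsp l.length k l le

/-- Data points are lists of naturals. -/
abbrev datapt : Type := List Nat

/-- k-d trees. -/
inductive kdtree : Type where
  | mt_tree : kdtree
  | node : Nat → datapt → kdtree → kdtree → kdtree

/-- Compare two data points on their `i`-th coordinate. -/
def ith_leb (i : Nat) (p q : datapt) : Bool := decide (p.getD i 0 ≤ q.getD i 0)

def median_partition (l : List datapt) (le : datapt → datapt → Bool) :
    Option (List datapt × datapt × List datapt) :=
  quick_select (l.length / 2) l le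

def next_depth (k d : Nat) : Nat := (d + 1) % k

def build_kdtree_ : Nat → Nat → List datapt → Nat → kdtree
  | 0, _, _, _ => .mt_tree
  | fuel + 1, k, data, depth_mod =>
    match data with
    | [] => .mt_tree
    | _ :: _ =>
      match median_partition data (ith_leb depth_mod) with
      | none => .mt_tree
      | some (sm, pvt, lg) =>
        .node depth_mod pvt
          (build_kdtree_ fuel k sm (next_depth k depth_mod))
          (build_kdtree_ fuel k lg (next_depth k depth_mod))

def build_kdtree (k : Nat) (data : List datapt) : kdtree :=
  build_kdtree_ data.length k data 0

/-- Bounding boxes: lower and upper bounds per coordinate (`none` = unbounded). -/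
structure bbox : Type where
  mins : List (Option Nat)
  maxs : List (Option Nat)

def list_set {A : Type} (l : List A) (d : Nat) (v : A) : List A := l.set d v

def bb_split (bb : bbox) (d : Nat) (v : Nat) : bbox × bbox :=
  (⟨bb.mins, list_set bb.maxs d (some v)⟩, ⟨list_set bb.mins d (some v), bb.maxs⟩)

/-- Coordinatewise containment of a point in a bounding box. -/
def bb_contains (bb : bbox) (pt : datapt) : Bool :=
  (List.range pt.length).all (fun i =>
    (match bb.mins.getD i none with
     | none => true
     | some s => decide (s ≤ pt.getD i 0)) &&
    (match bb.maxs.getD i none with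
     | none => true
     | some t => decide (pt.getD i 0 ≤ t)))

/-- Manhattan distance between two points (on naturals). -/
def sum_dist (q p : datapt) : Nat :=
  (List.zipWith (fun a b => (a - b) + (b - a)) q p).sum

/-- Closest enclosed point: clamp each coordinate of `vs` into the box. -/
def cep (vs : datapt) (mins maxs : List (Option Nat)) : datapt :=
  (List.range vs.length).map (fun i =>
    let v := vs.getD i 0
    let v1 := match maxs.getD i none with | none => v | some t => min v t
    match mins.getD i none with | none => v1 | some s => max s v1)

def kdtree_bounded : kdtree → bbox → Bool
  | .mt_tree, _ => true
  | .node ax pt lft rgt, bb =>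
    bb_contains bb pt &&
    kdtree_bounded lft (bb_split bb ax (pt.getD ax 0)).1 &&
    kdtree_bounded rgt (bb_split bb ax (pt.getD ax 0)).2

inductive In_kdtree : datapt → kdtree → Prop where
  | in_root : ∀ ax pt lft rgt, In_kdtree pt (.node ax pt lft rgt)
  | in_left : ∀ v ax pt lft rgt, In_kdtree v lft → In_kdtree v (.node ax pt lft rgt)
  | in_right : ∀ v ax pt lft rgt, In_kdtree v rgt → In_kdtree v (.node ax pt lft rgt)

inductive Contents_kdtree : kdtree → List datapt → Prop where
  | cmt : Contents_kdtree .mt_tree []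
  | cnode : ∀ ax pt lft rgt ll rl, Contents_kdtree lft ll → Contents_kdtree rgt rl →
      Contents_kdtree (.node ax pt lft rgt) (pt :: (ll ++ rl))

/- A (max-)priority queue of elements of `A` keyed by `key : A → Nat`,
   implemented as an unsorted list. -/
abbrev priqueue (A : Type) (_key : A → Nat) : Type := List A

def pq_empty (A : Type) (key : A → Nat) : priqueue A key := []

def pq_insert {A : Type} (key : A → Nat) (e : A) (pq : priqueue A key) : priqueue A key :=
  e :: pq

def pq_size {A : Type} {key : A → Nat} (pq : priqueue A key) : Nat := pq.length

/-- Remove (one) element of maximal key: returns it and the rest. -/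
def select_max {A : Type} (key : A → Nat) : A → List A → A × List A
  | x, [] => (x, [])
  | x, y :: ys =>
    if key y ≤ key x then
      let p := select_max key x ys
      (p.1, y :: p.2)
    else
      let p := select_max key y ys
      (p.1, x :: p.2)

def delete_max {A : Type} (key : A → Nat) : priqueue A key → Option (A × priqueue A key)
  | [] => none
  | x :: xs => some (select_max key x xs)

def peek_max {A : Type} (key : A → Nat) (pq : priqueue A key) : Option A :=
  (delete_max key pq).map Prod.fst

/-- Representation invariant (trivial for the list implementation). -/
def priq {A : Type} (key : A → Nat) (_pq : priqueue A key) : Prop := True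

/-- Abstraction relation between a priority queue and a list of its elements. -/
def PQAbs {A : Type} (key : A → Nat) (pq : priqueue A key) (l : List A) : Prop :=
  pq.Perm l

/-- Insert, but keep the queue size bounded by `K` (discarding a max element). -/
def insert_bounded {A : Type} (K : Nat) (key : A → Nat) (e : A) (pq : priqueue A key) :
    priqueue A key :=
  let updpq := pq_insert key e pq
  if K < pq_size updpq then
    match delete_max key updpq with
    | none => updpq
    | some (_, updpq') => updpq'
  else updpq

/-- K-nearest-neighbor search over a k-d tree with bounding-box pruning. -/
def knn (K k : Nat) : kdtree → bbox → datapt → priqueue datapt (fun _ => 0) → List datapt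
  | .mt_tree, _, _, pq => pq
  | .node ax pt lft rgt, bb, query, pq =>
    let prune : Bool :=
      match peek_max (sum_dist query) pq with
      | none => false
      | some top =>
        decide (K ≤ pq.length) &&
        decide (sum_dist query top < sum_dist query (cep query bb.mins bb.maxs))
    if prune then pq
    else
      let pq0 := insert_bounded K (sum_dist query) pt pq
      let bbs := bb_split bb ax (pt.getD ax 0)
      if ith_leb ax pt query then
        knn K k rgt bbs.2 query (knn K k lft bbs.1 query pq0)
      else
        knn K k lft bbs.1 query (knn K k rgt bbs.2 query pq0)

def knn_search (K k : Nat) (tree : kdtree) (query : datapt) : List datapt :=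
  knn K k tree ⟨List.replicate k none, List.replicate k none⟩ query []

/-- Every element of `l1` has key ≤ every element of `l2`. -/
def all_in_leb {A : Type} (key : A → Nat) (l1 l2 : List A) : Prop :=
  ∀ e1 ∈ l1, ∀ e2 ∈ l2, key e1 ≤ key e2

/-- Drop the first `n` elements of a list. -/
def dropn {A : Type} : Nat → List A → List A
  | 0, lst => lst
  | _ + 1, [] => []
  | n + 1, _ :: t => dropn n t

private lemma qsp_len3 {X : Type} (le : X → X → Bool) (pivot : X) (lst : List X) :
    (lst.filter (fun x => le x pivot && !le pivot x)).length +
    (lst.filter (fun x => le x pivot && le pivot x)).length +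
    (lst.filter (fun x => !le x pivot)).length = lst.length := by
  induction lst with
  | nil => simp
  | cons a t ih =>
    cases h1 : le a pivot <;> cases h2 : le pivot a <;>
      simp [List.filter, h1, h2] <;> omega

private lemma qsp_some {X : Type} (le : X → X → Bool) :
    ∀ steps k (l : List X), l.length ≤ steps → k < l.length →
      ∃ r, qsp steps k l le = some r := by
  intro steps
  induction steps with
  | zero => intro k l hl hk; omega
  | succ steps ih =>
    intro k l hl hk
    match l with
    | [] => simp at hk
    | pivot :: lst =>
      have hlen := qsp_len3 le pivot lst
      have hsm : (lst.filter (fun x => le x pivot && !le pivot x)).length ≤ lst.length :=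
        List.length_filter_le _ _
      have hlg : (lst.filter (fun x => !le x pivot)).length ≤ lst.length :=
        List.length_filter_le _ _
      simp only [qsp]
      by_cases h1 : k < (lst.filter (fun x => le x pivot && !le pivot x)).length
      · obtain ⟨⟨a, x, b⟩, hr⟩ := ih k _ (by simp at hl ⊢; omega) h1
        simp only [h1, if_true, hr]
        exact ⟨_, rfl⟩
      · simp only [h1, if_false]
        by_cases h2 : (lst.filter (fun x => le x pivot && !le pivot x)).length +
            (lst.filter (fun x => le x pivot && le pivot x)).length < k
        · obtain ⟨⟨a, x, b⟩, hr⟩ := ih (k - ((lst.filter (fun x => le x pivot && !le pivot x)).length +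
              (lst.filter (fun x => le x pivot && le pivot x)).length + 1))
            (lst.filter (fun x => !le x pivot))
            (by simp at hl ⊢; omega) (by simp at hk ⊢; omega)
          simp only [h2, if_true, hr]
          exact ⟨_, rfl⟩
        · simp only [h2, if_false]
          exact ⟨_, rfl⟩

theorem quick_select_always_some {X : Type} (k : Nat) (l : List X) (le : X → X → Bool)
    (h : k < l.length) :
    ∃ l1 v l2, quick_select k l le = some (l1, v, l2) := by
  obtain ⟨⟨l1, v, l2⟩, hr⟩ := qsp_some le l.length k l (Nat.le_refl _) h
  exact ⟨l1, v, l2, hr⟩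
end

section
/- If quickselect k l le = Some (l1, v, l2), then l is a permutation of l1 ++ v :: l2. -/
/-!
Each round partitions the tail into the elements strictly below, equivalent to and strictly
above the pivot, and these three filters together are a permutation of the tail. The returned
triple reassembles the pieces, with the result of the recursive call standing in for the
partition it was made on, so by induction on the fuel it is a permutation of the input.
-/

open List

theorem List.perm_filter_and_not_append_filter_and_append_filter_not {X : Type}
    (p q : X → Bool) (l : List X) :
    l ~ l.filter (fun x => p x && !q x) ++
      (l.filter (fun x => p x && q x) ++ l.filter (fun x => !p x)) := by
  have hp : l.filter (fun x => p x && !q x) ++ l.filter (fun x => p x && q x) ~ l.filter p := by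
    simpa only [filter_filter, Bool.not_not, Bool.and_comm] using
      (l.filter p).filter_append_perm (fun x => !q x)
  rw [← append_assoc]
  exact (l.filter_append_perm p).symm.trans (hp.symm.append_right _)

theorem perm_of_qsp_eq_some {X : Type} (le : X → X → Bool) :
    ∀ (fuel k : ℕ) (l a b : List X) (x : X), qsp fuel k l le = some (a, x, b) →
      l ~ a ++ x :: b
  | 0, _, _, _, _, _, h => by simp [qsp] at h
  | _ + 1, _, [], _, _, _, h => by simp [qsp] at h
  | fuel + 1, k, pivot :: lst, a, b, x, h => by
    simp only [qsp] at h
    set sm := lst.filter (fun x => le x pivot && !le pivot x)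
    set eq := lst.filter (fun x => le x pivot && le pivot x)
    set lg := lst.filter (fun x => !le x pivot)
    have hsplit : pivot :: lst ~ sm ++ pivot :: (eq ++ lg) :=
      ((perm_filter_and_not_append_filter_and_append_filter_not _ _ lst).cons pivot).trans
        perm_middle.symm
    split_ifs at h
    · split at h
      · contradiction
      · rename_i a' x' b' hrec
        simp only [Option.some.injEq, Prod.mk.injEq] at h
        obtain ⟨rfl, rfl, rfl⟩ := h
        calc pivot :: lst ~ sm ++ (pivot :: eq ++ lg) := hsplit
          _ ~ (a' ++ x' :: b') ++ (pivot :: eq ++ lg) :=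
            (perm_of_qsp_eq_some le fuel k sm a' b' x' hrec).append_right _
          _ = a' ++ x' :: (b' ++ (pivot :: eq ++ lg)) := by simp
    · split at h
      · contradiction
      · rename_i a' x' b' hrec
        simp only [Option.some.injEq, Prod.mk.injEq] at h
        obtain ⟨rfl, rfl, rfl⟩ := h
        calc pivot :: lst ~ (sm ++ pivot :: eq) ++ lg := by simpa using hsplit
          _ ~ lg ++ (sm ++ pivot :: eq) := perm_append_comm
          _ ~ (a' ++ x' :: b') ++ (sm ++ pivot :: eq) :=
            (perm_of_qsp_eq_some le fuel _ lg a' b' x' hrec).append_right _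
          _ ~ a' ++ (sm ++ pivot :: eq) ++ x' :: b' := by
            simpa using
              (perm_append_comm (l₁ := x' :: b') (l₂ := sm ++ pivot :: eq)).append_left a'
    · cases h
      set j := k - sm.length
      calc pivot :: lst ~ sm ++ pivot :: (eq ++ lg) := hsplit
        _ = sm ++ pivot :: (eq.take j ++ (eq.drop j ++ lg)) := by
            rw [← append_assoc, take_append_drop]
        _ ~ sm ++ (eq.take j ++ pivot :: (eq.drop j ++ lg)) := perm_middle.symm.append_left sm
        _ = sm ++ eq.take j ++ pivot :: (eq.drop j ++ lg) := (append_assoc ..).symm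

theorem quick_select_permutation {X : Type} (k : Nat) (l : List X) (le : X → X → Bool)
    (l1 l2 : List X) (v : X) (h : quick_select k l le = some (l1, v, l2)) :
    l.Perm (l1 ++ v :: l2) :=
  perm_of_qsp_eq_some le l.length k l l1 l2 v h
end

section
/- If qsp steps k l le = Some (l1, v, l2), then length l1 = k. -/
theorem List.length_append_take_sub {α : Type*} {s e : List α} {k : Nat}
    (hs : s.length ≤ k) (he : k ≤ s.length + e.length) :
    (s ++ e.take (k - s.length)).length = k := by
  simp only [List.length_append, List.length_take]
  omega

theorem qsp_position {X : Type} (steps k : Nat) (l : List X) (le : X → X → Bool)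
    (l1 l2 : List X) (v : X) (h : qsp steps k l le = some (l1, v, l2)) :
    l1.length = k := by
  induction steps generalizing k l l1 l2 v with
  | zero => simp [qsp] at h
  | succ n ih =>
    obtain _ | ⟨pivot, lst⟩ := l
    · simp [qsp] at h
    simp only [qsp] at h
    split_ifs at h
    · split at h
      · cases h
      · rename_i hrec
        cases h
        exact ih _ _ _ _ _ hrec
    · split at h
      · cases h
      · rename_i hrec
        cases h
        simp only [List.length_append, List.length_cons, ih _ _ _ _ _ hrec]
        omega
    · cases h
      exact List.length_append_take_sub (by omega) (by omega)
end

section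
/- Assume le is transitive and total (for all a b, le a b = true or le b a = true). If qsp steps k l le = Some (l1, v, l2), then for every x in l1, le x v = true. -/
/-!
Induction on the fuel. An element of `l1` either comes from the recursive call or is `≤` the pivot,
having been put in the smaller or the equal part. When `v` is the pivot this is the claim; when `v`
was found among the elements strictly above the pivot, totality gives `pivot ≤ v` and transitivity
through the pivot finishes.
-/

theorem le_props.le_of_le_eq_false {X : Type} {le : X → X → Bool} (H : le_props le) {a b : X}
    (h : le a b = false) : le b a = true :=
  (H.2 a b).resolve_left (by simp [h])

theorem le_of_mem_filter_le_and {X : Type} {le : X → X → Bool} {p x : X} {q : X → Bool}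
    {t : List X} (hx : x ∈ t.filter (fun y => le y p && q y)) : le x p = true := by
  simp only [List.mem_filter, Bool.and_eq_true] at hx
  exact hx.2.1

theorem qsp_succ_cons_eq_some {X : Type} {n k : Nat} {p : X} {t : List X} {le : X → X → Bool}
    {l1 l2 : List X} {v : X} (h : qsp (n + 1) k (p :: t) le = some (l1, v, l2)) :
    (∃ l2', qsp n k (t.filter fun x => le x p && !le p x) le = some (l1, v, l2')) ∨
    (∃ j l1', qsp n j (t.filter fun x => !le x p) le = some (l1', v, l2) ∧
      l1 = l1' ++ (t.filter (fun x => le x p && !le p x) ++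
        p :: t.filter fun x => le x p && le p x)) ∨
    (v = p ∧ ∃ i, l1 = t.filter (fun x => le x p && !le p x) ++
      (t.filter fun x => le x p && le p x).take i) := by
  simp only [qsp] at h
  split_ifs at h
  · split at h
    · simp at h
    · rename_i heq
      obtain ⟨rfl, rfl, rfl⟩ := by simpa using h
      exact Or.inl ⟨_, heq⟩
  · split at h
    · simp at h
    · rename_i heq
      obtain ⟨rfl, rfl, rfl⟩ := by simpa using h
      exact Or.inr (Or.inl ⟨_, _, heq, rfl⟩)
  · obtain ⟨rfl, rfl, rfl⟩ := by simpa using h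
    exact Or.inr (Or.inr ⟨rfl, _, rfl⟩)

theorem mem_of_qsp_eq_some {X : Type} {steps k : Nat} {l : List X} {le : X → X → Bool}
    {l1 l2 : List X} {v : X} (h : qsp steps k l le = some (l1, v, l2)) : v ∈ l := by
  induction steps generalizing k l l1 l2 with
  | zero => simp [qsp] at h
  | succ n ih =>
    cases l with
    | nil => simp [qsp] at h
    | cons p t =>
      rcases qsp_succ_cons_eq_some h with ⟨_, hsm⟩ | ⟨_, _, hlg, -⟩ | ⟨rfl, -⟩
      · exact List.mem_cons_of_mem _ (List.mem_filter.mp (ih hsm)).1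
      · exact List.mem_cons_of_mem _ (List.mem_filter.mp (ih hlg)).1
      · exact List.mem_cons_self

theorem qsp_all_smaller {X : Type} (steps k : Nat) (l : List X) (le : X → X → Bool)
    (l1 l2 : List X) (v : X) (Hle : le_props le)
    (h : qsp steps k l le = some (l1, v, l2)) :
    ∀ x ∈ l1, le x v = true := by
  induction steps generalizing k l l1 l2 v with
  | zero => simp [qsp] at h
  | succ n ih =>
    cases l with
    | nil => simp [qsp] at h
    | cons p t =>
      rcases qsp_succ_cons_eq_some h with ⟨_, hsm⟩ | ⟨j, l1', hlg, rfl⟩ | ⟨rfl, i, rfl⟩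
      · exact ih _ _ _ _ _ hsm
      · have hpv : le p v = true := Hle.le_of_le_eq_false <| by
          simpa using (List.mem_filter.mp (mem_of_qsp_eq_some hlg)).2
        intro x hx
        simp only [List.mem_append, List.mem_cons] at hx
        rcases hx with hx | hx | rfl | hx
        · exact ih _ _ _ _ _ hlg x hx
        · exact Hle.1 _ _ _ (le_of_mem_filter_le_and hx) hpv
        · exact hpv
        · exact Hle.1 _ _ _ (le_of_mem_filter_le_and hx) hpv
      · intro x hx
        rcases List.mem_append.mp hx with hx | hx
        · exact le_of_mem_filter_le_and hx
        · exact le_of_mem_filter_le_and (List.mem_of_mem_take hx)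
end

section
/- For any transitive and total boolean comparison le on a type X, any k and list l with k < length l, there exist l1, v, l2 such that quickselect k l le = Some (l1, v, l2), l is a permutation of l1 ++ v :: l2, length l1 = k, every element of l1 is ≤ v under le, and v is ≤ every element of l2 under le. -/
section QSPCorrect

private lemma filter_filter' {X : Type} (p q : X → Bool) (l : List X) :
    (l.filter p).filter q = l.filter fun a => p a && q a := by
  rw [List.filter_filter]; exact List.filter_congr fun x _ => Bool.and_comm _ _

theorem qsp_correct {X : Type} (le : X → X → Bool) (Hle : le_props le) :
    ∀ fuel k (l : List X), k < l.length → l.length ≤ fuel →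
    ∃ l1 v l2, qsp fuel k l le = some (l1, v, l2) ∧ l.Perm (l1 ++ v :: l2) ∧
      l1.length = k ∧ (∀ x ∈ l1, le x v = true) ∧ (∀ x ∈ l2, le v x = true) := by
  obtain ⟨htrans, htot⟩ := Hle
  intro fuel
  induction fuel with
  | zero => intro k l hk hf; omega
  | succ steps ih =>
    intro k l hk hf
    match l with
    | [] => simp at hk
    | pivot :: lst =>
      set sm := lst.filter (fun x => le x pivot && !le pivot x) with hsm_def
      set eqs := lst.filter (fun x => le x pivot && le pivot x) with heqs_def
      set lg := lst.filter (fun x => !le x pivot) with hlg_def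
      -- membership facts
      have hsm_mem : ∀ y ∈ sm, le y pivot = true := by
        intro y hy; rw [hsm_def, List.mem_filter] at hy
        have := hy.2; simp only [Bool.and_eq_true] at this; exact this.1
      have heqs_mem : ∀ y ∈ eqs, le y pivot = true ∧ le pivot y = true := by
        intro y hy; rw [heqs_def, List.mem_filter] at hy
        have := hy.2; simp only [Bool.and_eq_true] at this; exact this
      have hlg_mem : ∀ y ∈ lg, le pivot y = true := by
        intro y hy; rw [hlg_def, List.mem_filter] at hy
        rcases htot y pivot with h | h
        · simp [h] at hy
        · exact h
      -- the three filters partition lst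
      have hsm_eq : sm = (lst.filter (fun x => le x pivot)).filter (fun x => !le pivot x) := by
        rw [hsm_def, filter_filter']
      have heqs_eq : eqs = (lst.filter (fun x => le x pivot)).filter
          (fun x => !(!le pivot x)) := by
        rw [heqs_def, filter_filter']; simp
      have hperm0 : lst.Perm (sm ++ (eqs ++ lg)) := by
        have h2 : (lst.filter (fun x => le x pivot)).Perm (sm ++ eqs) := by
          rw [hsm_eq, heqs_eq]; exact (List.filter_append_perm _ _).symm
        rw [← List.append_assoc]
        exact (List.filter_append_perm (fun x => le x pivot) lst).symm.trans
          (h2.append (List.Perm.refl lg))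
      have hlen0 : sm.length + eqs.length + lg.length = lst.length := by
        have := hperm0.length_eq; simp at this; omega
      have hsm_le : sm.length ≤ lst.length := List.length_filter_le _ _
      have hlg_le : lg.length ≤ lst.length := List.length_filter_le _ _
      have hfl : lst.length ≤ steps := by simp at hf; omega
      rw [qsp]
      by_cases hc1 : k < sm.length
      · rw [if_pos hc1]
        obtain ⟨a, x, b, hq, hperm, hlen, hall1, hall2⟩ :=
          ih k sm hc1 (le_trans hsm_le hfl)
        rw [hq]
        have hxsm : x ∈ sm := hperm.mem_iff.mpr (by simp)
        have hxpiv : le x pivot = true := hsm_mem x hxsm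
        refine ⟨a, x, b ++ ((pivot :: eqs) ++ lg), rfl, ?_, hlen, hall1, ?_⟩
        · rw [← Multiset.coe_eq_coe] at hperm0 hperm ⊢
          simp only [← Multiset.cons_coe, ← Multiset.coe_add,
            ← Multiset.singleton_add] at hperm0 hperm ⊢
          rw [hperm0, hperm]; abel
        · intro y hy
          simp only [List.mem_append, List.mem_cons] at hy
          rcases hy with hy | (rfl | hy) | hy
          · exact hall2 y hy
          · exact hxpiv
          · exact htrans _ _ _ hxpiv (heqs_mem y hy).2
          · exact htrans _ _ _ hxpiv (hlg_mem y hy)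
      · rw [if_neg hc1]
        by_cases hc2 : sm.length + eqs.length < k
        · rw [if_pos hc2]
          have hk' : k - (sm.length + eqs.length + 1) < lg.length := by
            simp at hk; omega
          obtain ⟨a, x, b, hq, hperm, hlen, hall1, hall2⟩ :=
            ih _ lg hk' (le_trans hlg_le hfl)
          rw [hq]
          have hxlg : x ∈ lg := hperm.mem_iff.mpr (by simp)
          have hpivx : le pivot x = true := hlg_mem x hxlg
          refine ⟨a ++ (sm ++ (pivot :: eqs)), x, b, rfl, ?_, ?_, ?_, hall2⟩
          · rw [← Multiset.coe_eq_coe] at hperm0 hperm ⊢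
            simp only [← Multiset.cons_coe, ← Multiset.coe_add,
              ← Multiset.singleton_add] at hperm0 hperm ⊢
            rw [hperm0, hperm]; abel
          · simp [hlen]; omega
          · intro y hy
            simp only [List.mem_append, List.mem_cons] at hy
            rcases hy with hy | hy | (rfl | hy)
            · exact hall1 y hy
            · exact htrans _ _ _ (hsm_mem y hy) hpivx
            · exact hpivx
            · exact htrans _ _ _ (heqs_mem y hy).1 hpivx
        · rw [if_neg hc2]
          refine ⟨sm ++ eqs.take (k - sm.length), pivot,
            eqs.drop (k - sm.length) ++ lg, rfl, ?_, ?_, ?_, ?_⟩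
          · have hsplit : eqs = eqs.take (k - sm.length) ++ eqs.drop (k - sm.length) :=
              (List.take_append_drop _ _).symm
            rw [← Multiset.coe_eq_coe] at hperm0 ⊢
            rw [hsplit] at hperm0
            simp only [← Multiset.cons_coe, ← Multiset.coe_add,
              ← Multiset.singleton_add] at hperm0 ⊢
            rw [hperm0]; abel
          · simp; omega
          · intro y hy
            simp only [List.mem_append] at hy
            rcases hy with hy | hy
            · exact hsm_mem y hy
            · exact (heqs_mem y (List.take_subset _ _ hy)).1
          · intro y hy
            simp only [List.mem_append] at hy
            rcases hy with hy | hy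
            · exact (heqs_mem y (List.drop_subset _ _ hy)).2
            · exact hlg_mem y hy

end QSPCorrect

theorem quick_select_exists_correct {X : Type} (k : Nat) (l : List X) (le : X → X → Bool)
    (Hle : le_props le) (h : k < l.length) :
    ∃ l1 v l2,
      quick_select k l le = some (l1, v, l2) ∧
      l.Perm (l1 ++ v :: l2) ∧
      l1.length = k ∧
      (∀ x ∈ l1, le x v = true) ∧
      (∀ x ∈ l2, le v x = true) := by
  exact qsp_correct le Hle l.length k l h le_rfl
end

section
/- If k < length l and length l ≤ steps, then there exists p such that qsp steps k l le = Some p (i.e., the fuel never runs out). -/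
/-! Each recursive call works on one of three filters of the tail, so on a strictly shorter list,
while the fuel drops by one: `length ≤ fuel` is invariant. Since the three filters partition the
tail, the shifted index of the right-hand call stays below the length of its list. -/

theorem List.length_filter_and_not_add_length_filter_and_add_length_filter_not {α : Type*}
    (l : List α) (p q : α → Bool) :
    (l.filter (fun x => p x && !q x)).length + (l.filter (fun x => p x && q x)).length +
      (l.filter (fun x => !p x)).length = l.length := by
  induction l with
  | nil => rfl
  | cons a l ih =>
    simp only [List.filter_cons]
    cases p a <;> cases q a <;> simp <;> omega

theorem qsp_works {X : Type} (steps k : Nat) (l : List X) (le : X → X → Bool)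
    (hk : k < l.length) (hsteps : l.length ≤ steps) :
    ∃ p, qsp steps k l le = some p := by
  induction steps generalizing k l with
  | zero => omega
  | succ n ih =>
    obtain _ | ⟨pivot, lst⟩ := l
    · simp at hk
    rw [List.length_cons] at hk hsteps
    have hparts := lst.length_filter_and_not_add_length_filter_and_add_length_filter_not
      (le · pivot) (le pivot ·)
    simp only [qsp]
    set sm := lst.filter (fun x => le x pivot && !le pivot x)
    set eq := lst.filter (fun x => le x pivot && le pivot x)
    set lg := lst.filter (fun x => !le x pivot)
    split_ifs with hsm hlg
    · obtain ⟨p, hp⟩ := ih k sm hsm (by omega)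
      simp [hp]
    · obtain ⟨p, hp⟩ := ih (k - (sm.length + eq.length + 1)) lg (by omega) (by omega)
      simp [hp]
    · exact ⟨_, rfl⟩
end

section
/- Given a number of dimensions k > 0 and a list data of data points each of length k, the k-d tree built from data is properly bounded by the fully unconstrained bounding box: kdtree_bounded (build_kdtree k data) (mk_bbox (repeat None k) (repeat None k)) = true. -/
/-! Quickselect returns a pivot drawn from the list together with two sublists lying weakly
below and above it. Along the coordinate on which a node splits, the left part of the data
therefore lies in the lower half of the current box and the right part in the upper half, so
by induction every subtree is bounded by the box that `kdtree_bounded` assigns to it. The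
fully unconstrained box contains every point. -/

theorem qsp_eq_some {X : Type} {le : X → X → Bool} (hle : le_props le) {steps k : ℕ}
    {l a b : List X} {x : X} (h : qsp steps k l le = some (a, x, b)) :
    x ∈ l ∧ (∀ y ∈ a, y ∈ l ∧ le y x = true) ∧ (∀ y ∈ b, y ∈ l ∧ le x y = true) := by
  obtain ⟨htrans, htotal⟩ := hle
  induction steps generalizing k l a b x with
  | zero => simp [qsp] at h
  | succ n ih =>
    obtain _ | ⟨pivot, lst⟩ := l
    · simp [qsp] at h
    simp only [qsp] at h
    set sm := lst.filter (fun y => le y pivot && !le pivot y)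
    set eq := lst.filter (fun y => le y pivot && le pivot y)
    set lg := lst.filter (fun y => !le y pivot)
    have hsm : ∀ y ∈ sm, y ∈ lst ∧ le y pivot := by
      simp +contextual [sm, List.mem_filter]
    have heq : ∀ y ∈ eq, y ∈ lst ∧ le y pivot ∧ le pivot y := by
      simp +contextual [eq, List.mem_filter]
    have hlg : ∀ y ∈ lg, y ∈ lst ∧ le pivot y := by
      intro y hy
      simp only [lg, List.mem_filter, Bool.not_eq_eq_eq_not, Bool.not_true] at hy
      exact ⟨hy.1, (htotal y pivot).resolve_left (by simp [hy.2])⟩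
    -- In the recursive cases the blocks appended on the far side of the pivot are compared
    -- with `x` through the pivot, by transitivity.
    split_ifs at h
    · split at h <;> simp only [reduceCtorEq, Option.some.injEq, Prod.mk.injEq] at h
      next hrec => obtain ⟨rfl, rfl, rfl⟩ := h; grind [ih hrec]
    · split at h <;> simp only [reduceCtorEq, Option.some.injEq, Prod.mk.injEq] at h
      next hrec => obtain ⟨rfl, rfl, rfl⟩ := h; grind [ih hrec]
    · simp only [Option.some.injEq, Prod.mk.injEq] at h
      obtain ⟨rfl, rfl, rfl⟩ := h
      grind [List.mem_of_mem_take, List.mem_of_mem_drop]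

theorem ith_leb_le_props (i : ℕ) : le_props (ith_leb i) := by
  constructor <;> simp only [ith_leb, decide_eq_true_eq] <;> omega

theorem median_partition_ith_leb_eq_some {i : ℕ} {l sm lg : List datapt} {p : datapt}
    (h : median_partition l (ith_leb i) = some (sm, p, lg)) :
    p ∈ l ∧ (∀ y ∈ sm, y ∈ l ∧ y.getD i 0 ≤ p.getD i 0) ∧
      (∀ y ∈ lg, y ∈ l ∧ p.getD i 0 ≤ y.getD i 0) := by
  simpa only [ith_leb, decide_eq_true_eq] using qsp_eq_some (ith_leb_le_props i) h

theorem List.getD_set_eq_or {α : Type*} (l : List α) (d i : ℕ) (a x : α) :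
    (l.set d a).getD i x = l.getD i x ∨ (i = d ∧ (l.set d a).getD i x = a) := by
  simp only [List.getD_eq_getElem?_getD, List.getElem?_set]
  split_ifs <;> simp_all

theorem bb_contains_bb_split_fst {bb : bbox} {y : datapt} {d v : ℕ}
    (h : bb_contains bb y = true) (hy : y.getD d 0 ≤ v) :
    bb_contains (bb_split bb d v).1 y = true := by
  simp only [bb_contains, List.all_eq_true, Bool.and_eq_true] at h ⊢
  refine fun i hi => ⟨(h i hi).1, ?_⟩
  rcases List.getD_set_eq_or bb.maxs d i (some v) none with he | ⟨rfl, he⟩ <;>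
    simp only [bb_split, list_set, he]
  · exact (h i hi).2
  · simpa using hy

theorem bb_contains_bb_split_snd {bb : bbox} {y : datapt} {d v : ℕ}
    (h : bb_contains bb y = true) (hy : v ≤ y.getD d 0) :
    bb_contains (bb_split bb d v).2 y = true := by
  simp only [bb_contains, List.all_eq_true, Bool.and_eq_true] at h ⊢
  refine fun i hi => ⟨?_, (h i hi).2⟩
  rcases List.getD_set_eq_or bb.mins d i (some v) none with he | ⟨rfl, he⟩ <;>
    simp only [bb_split, list_set, he]
  · exact (h i hi).1
  · simpa using hy

theorem kdtree_bounded_build_kdtree_ {bb : bbox} {fuel k dm : ℕ} {data : List datapt}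
    (h : ∀ y ∈ data, bb_contains bb y = true) :
    kdtree_bounded (build_kdtree_ fuel k data dm) bb = true := by
  induction fuel generalizing bb data dm with
  | zero => simp [build_kdtree_, kdtree_bounded]
  | succ n ih =>
    obtain _ | ⟨p, ps⟩ := data
    · simp [build_kdtree_, kdtree_bounded]
    simp only [build_kdtree_]
    split
    next => simp [kdtree_bounded]
    next sm pvt lg hmp =>
      obtain ⟨hpvt, hsm, hlg⟩ := median_partition_ith_leb_eq_some hmp
      simp only [kdtree_bounded, Bool.and_eq_true]
      exact ⟨⟨h _ hpvt,
        ih fun y hy => bb_contains_bb_split_fst (h y (hsm y hy).1) (hsm y hy).2⟩,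
        ih fun y hy => bb_contains_bb_split_snd (h y (hlg y hy).1) (hlg y hy).2⟩

theorem bb_contains_replicate_none (k : ℕ) (y : datapt) :
    bb_contains ⟨List.replicate k none, List.replicate k none⟩ y = true := by
  simp [bb_contains, List.getD_eq_getElem?_getD]

theorem build_kdtree_bounded_general (k : Nat) (data : List datapt) :
    kdtree_bounded (build_kdtree k data)
      ⟨List.replicate k none, List.replicate k none⟩ = true :=
  kdtree_bounded_build_kdtree_ fun y _ => bb_contains_replicate_none k y

theorem build_kdtree_bounded (k : Nat) (data : List datapt) (hk : 0 < k)
    (hdim : ∀ v' ∈ data, v'.length = k) :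
    kdtree_bounded (build_kdtree k data)
      ⟨List.replicate k none, List.replicate k none⟩ = true :=
  build_kdtree_bounded_general k data
end

section
/- For any k > 0 and list data of data points, there exists a list lst such that Contents_kdtree (build_kdtree k data) lst and data is a permutation of lst. -/
/-!
Quickselect with fuel at least the length of its input always succeeds and returns a split
`a ++ x :: b` of a permutation of that input. Hence every node of the built tree stores its
median together with trees for `a` and `b`, which are strictly shorter than the input, so the
fuel `data.length` never runs out and the contents are a permutation of `data`.
-/

theorem filter_three_way_perm {X : Type} (p q : X → Bool) (l : List X) :
    (l.filter (fun x => p x && !q x) ++ l.filter (fun x => p x && q x) ++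
      l.filter (fun x => !p x)).Perm l := by
  have hq := List.filter_append_perm q (l.filter p)
  simp only [List.filter_filter, Bool.and_comm (q _), Bool.and_comm (!q _)] at hq
  exact (List.perm_append_comm.trans hq).append_right _ |>.trans (List.filter_append_perm p l)

theorem exists_qsp_eq_some_perm {X : Type} (le : X → X → Bool) {steps k : ℕ} {l : List X}
    (hsteps : l.length ≤ steps) (hk : k < l.length) :
    ∃ a x b, qsp steps k l le = some (a, x, b) ∧ l.Perm (a ++ x :: b) := by
  induction steps generalizing k l with
  | zero => omega
  | succ steps ih =>
    obtain _ | ⟨pivot, lst⟩ := l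
    · simp at hk
    have hpart := filter_three_way_perm (le · pivot) (le pivot ·) lst
    generalize hsm_def : lst.filter (fun x => le x pivot && !le pivot x) = sm at hpart
    generalize heqs_def : lst.filter (fun x => le x pivot && le pivot x) = eqs at hpart
    generalize hlg_def : lst.filter (fun x => !le x pivot) = lg at hpart
    have hlen := hpart.length_eq
    simp only [List.length_append, List.length_cons] at hlen hsteps hk
    simp only [qsp, hsm_def, heqs_def, hlg_def]
    -- in `Multiset X` the permutation goals below become `abel` identities
    simp only [← Multiset.coe_eq_coe, ← Multiset.coe_add] at hpart
    by_cases hsm : k < sm.length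
    · obtain ⟨a, x, b, hq, hp⟩ := ih (by omega) hsm
      refine ⟨a, x, b ++ (pivot :: eqs ++ lg), by simp [hsm, hq], ?_⟩
      simp only [← Multiset.coe_eq_coe, ← Multiset.coe_add, ← Multiset.cons_coe] at hp ⊢
      rw [← hpart, hp]
      simp only [← Multiset.singleton_add]
      abel
    by_cases hlg : sm.length + eqs.length < k
    · obtain ⟨a, x, b, hq, hp⟩ :=
        ih (k := k - (sm.length + eqs.length + 1)) (l := lg) (by omega) (by omega)
      refine ⟨a ++ (sm ++ pivot :: eqs), x, b, by simp [hsm, hlg, hq], ?_⟩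
      simp only [← Multiset.coe_eq_coe, ← Multiset.coe_add, ← Multiset.cons_coe] at hp ⊢
      rw [← hpart, hp]
      simp only [← Multiset.singleton_add]
      abel
    refine ⟨sm ++ eqs.take (k - sm.length), pivot, eqs.drop (k - sm.length) ++ lg,
      by simp [hsm, hlg], ?_⟩
    have heqs : (eqs : Multiset X) = ↑(eqs.take (k - sm.length)) + ↑(eqs.drop (k - sm.length)) := by
      rw [Multiset.coe_add, List.take_append_drop]
    simp only [← Multiset.coe_eq_coe, ← Multiset.coe_add, ← Multiset.cons_coe]
    rw [← hpart, heqs]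
    simp only [← Multiset.singleton_add]
    abel

theorem exists_median_partition_eq_some_perm (le : datapt → datapt → Bool) {l : List datapt}
    (hl : l ≠ []) : ∃ a x b, median_partition l le = some (a, x, b) ∧ l.Perm (a ++ x :: b) :=
  exists_qsp_eq_some_perm le le_rfl (Nat.div_lt_self (List.length_pos_iff.2 hl) one_lt_two)

theorem exists_contents_build_kdtree_perm_of_length_le (k : ℕ) {fuel : ℕ} {data : List datapt}
    (depth : ℕ) (hfuel : data.length ≤ fuel) :
    ∃ lst, Contents_kdtree (build_kdtree_ fuel k data depth) lst ∧ data.Perm lst := by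
  induction fuel generalizing data depth with
  | zero =>
    rw [List.eq_nil_of_length_eq_zero (Nat.le_zero.1 hfuel)]
    exact ⟨[], .cmt, .nil⟩
  | succ fuel ih =>
    obtain _ | ⟨d, ds⟩ := data
    · exact ⟨[], .cmt, .nil⟩
    obtain ⟨a, x, b, hmed, hperm⟩ :=
      exists_median_partition_eq_some_perm (ith_leb depth) (List.cons_ne_nil d ds)
    have hlen := hperm.length_eq
    simp only [List.length_append, List.length_cons] at hlen hfuel
    obtain ⟨la, hca, hpa⟩ := ih (next_depth k depth) (show a.length ≤ fuel by omega)
    obtain ⟨lb, hcb, hpb⟩ := ih (next_depth k depth) (show b.length ≤ fuel by omega)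
    refine ⟨x :: (la ++ lb), ?_, ?_⟩
    · simpa only [build_kdtree_, hmed] using .cnode _ _ _ _ _ _ hca hcb
    · exact hperm.trans (List.perm_middle.trans ((hpa.append hpb).cons x))

theorem build_kdtree_contents_perm_general (k : Nat) (data : List datapt) :
    ∃ lst, Contents_kdtree (build_kdtree k data) lst ∧ data.Perm lst :=
  exists_contents_build_kdtree_perm_of_length_le k 0 le_rfl

theorem build_kdtree_contents_perm (k : Nat) (data : List datapt) (hk : 0 < k) :
    ∃ lst, Contents_kdtree (build_kdtree k data) lst ∧ data.Perm lst :=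
  build_kdtree_contents_perm_general k data
end

section
/- Rearrangement of two two-part partitions of the same multiset when one partition is order-separated: if a ++ b is a permutation of lst, c ++ d is a permutation of lst, and every element of c has key ≤ every element of d (all_in_leb key c d), then there exist a1, a2, b1, b2 such that a1 ++ a2 is a permutation of a, b1 ++ b2 is a permutation of b, a1 ++ b1 is a permutation of c, a2 ++ b2 is a permutation of d, all_in_leb key a1 a2, and all_in_leb key b1 b2. -/
/-! Any common refinement of the two partitions works: its parts `a₁, b₁` lie in `c` and
`a₂, b₂` in `d`, so they inherit the order separation of `c` and `d`. Such a refinement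
always exists, because multisets have the Riesz decomposition property. -/

theorem Multiset.exists_refinement_of_add_eq_add {α : Type*} {a b c d : Multiset α}
    (h : a + b = c + d) :
    ∃ a₁ a₂ b₁ b₂ : Multiset α, a₁ + a₂ = a ∧ b₁ + b₂ = b ∧ a₁ + b₁ = c ∧ a₂ + b₂ = d := by
  classical
  refine ⟨a ∩ c, a - c, c - a, b ∩ d, ?_, ?_, ?_, ?_⟩
  · rw [add_comm]; exact sub_add_inter a c
  · rw [add_comm]; exact inter_add_sub_of_add_eq_add h
  · rw [inter_comm, add_comm]; exact sub_add_inter c a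
  · rw [add_comm, inter_comm]; exact inter_add_sub_of_add_eq_add h.symm

theorem List.Perm.exists_refinement {α : Type*} {a b c d : List α} (h : (a ++ b).Perm (c ++ d)) :
    ∃ a₁ a₂ b₁ b₂ : List α, (a₁ ++ a₂).Perm a ∧ (b₁ ++ b₂).Perm b ∧ (a₁ ++ b₁).Perm c ∧
      (a₂ ++ b₂).Perm d := by
  have hm : (a + b : Multiset α) = c + d := by
    rw [Multiset.coe_add, Multiset.coe_add, Multiset.coe_eq_coe]; exact h
  obtain ⟨a₁, a₂, b₁, b₂, ha, hb, hc, hd⟩ := Multiset.exists_refinement_of_add_eq_add hm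
  refine ⟨a₁.toList, a₂.toList, b₁.toList, b₂.toList, ?_, ?_, ?_, ?_⟩ <;>
    rw [← Multiset.coe_eq_coe, ← Multiset.coe_add, Multiset.coe_toList, Multiset.coe_toList] <;>
    assumption

theorem all_in_leb.mono {A : Type} {key : A → Nat} {l₁ l₂ l₁' l₂' : List A}
    (h : all_in_leb key l₁ l₂) (h₁ : l₁' ⊆ l₁) (h₂ : l₂' ⊆ l₂) : all_in_leb key l₁' l₂' :=
  fun e₁ he₁ e₂ he₂ => h e₁ (h₁ he₁) e₂ (h₂ he₂)

theorem perm_split_rearrange_all_in_leb {A : Type} (key : A → Nat)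
    (lst a b c d : List A)
    (Hab : (a ++ b).Perm lst) (Hcd : (c ++ d).Perm lst)
    (Hleb : all_in_leb key c d) :
    ∃ a1 a2 b1 b2,
      (a1 ++ a2).Perm a ∧
      (b1 ++ b2).Perm b ∧
      (a1 ++ b1).Perm c ∧
      (a2 ++ b2).Perm d ∧
      all_in_leb key a1 a2 ∧
      all_in_leb key b1 b2 := by
  obtain ⟨a1, a2, b1, b2, ha, hb, hc, hd⟩ := (Hab.trans Hcd.symm).exists_refinement
  refine ⟨a1, a2, b1, b2, ha, hb, hc, hd, Hleb.mono ?_ ?_, Hleb.mono ?_ ?_⟩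
  · exact fun _ hx => hc.subset (List.mem_append_left b1 hx)
  · exact fun _ hx => hd.subset (List.mem_append_left b2 hx)
  · exact fun _ hx => hc.subset (List.mem_append_right a1 hx)
  · exact fun _ hx => hd.subset (List.mem_append_right a2 hx)
end

section
/- Generalized size invariant of knn: if the priority queue pq has abstract contents lst, the tree has contents data, and size pq ≤ K, then the size of knn K k tree bb query pq equals min K (length data + size pq). -/
def LengthSaturates {α : Type} (K n : ℕ) (f : List α → List α) : Prop :=
  ∀ l : List α, l.length ≤ K → (f l).length = min K (n + l.length)

theorem LengthSaturates.comp {α : Type} {K m n : ℕ} {f g : List α → List α}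
    (hg : LengthSaturates K n g) (hf : LengthSaturates K m f) :
    LengthSaturates K (n + m) (g ∘ f) := by
  intro l hl
  rw [Function.comp_apply, hg _ (by rw [hf l hl]; omega), hf l hl]
  omega

theorem length_select_max_snd {A : Type} (key : A → ℕ) (x : A) (ys : List A) :
    (select_max key x ys).2.length = ys.length := by
  induction ys generalizing x with
  | nil => rfl
  | cons y ys ih =>
    simp only [select_max]
    split <;> simp [ih]

theorem lengthSaturates_insert_bounded {A : Type} (K : ℕ) (key : A → ℕ) (e : A) :
    LengthSaturates K 1 (insert_bounded K key e) := by
  intro pq hpq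
  unfold insert_bounded pq_insert pq_size
  simp only [List.length_cons]
  split_ifs with hK
  · simp only [delete_max, length_select_max_snd]; omega
  · simp only [List.length_cons]; omega

theorem lengthSaturates_knn {K k : ℕ} {tree : kdtree} {data : List datapt}
    (hc : Contents_kdtree tree data) (bb : bbox) (query : datapt) :
    LengthSaturates K data.length (knn K k tree bb query) := by
  induction hc generalizing bb with
  | cmt => intro pq _; simp only [knn, List.length_nil]; omega
  | cnode ax pt lft rgt ll rl _ _ ihl ihr =>
    intro pq hpq
    have hins := lengthSaturates_insert_bounded K (sum_dist query) pt
    have hlen : (pt :: (ll ++ rl)).length = rl.length + ll.length + 1 := by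
      simp only [List.length_cons, List.length_append]; omega
    rw [knn, hlen]
    split_ifs with hprune
    · -- The search only prunes once the queue is already full.
      have hK : K ≤ pq.length := by split at hprune <;> simp_all
      omega
    · exact ((ihr _).comp (ihl _)).comp hins pq hpq
    · rw [Nat.add_comm rl.length]
      exact ((ihl _).comp (ihr _)).comp hins pq hpq

theorem knn_search_build_size_gen_general (tree : kdtree) (bb : bbox) (K k : Nat)
    (data : List datapt) (query : datapt)
    (pq : priqueue datapt (sum_dist query))
    (hc : Contents_kdtree tree data)
    (hsz : pq_size (key := sum_dist query) pq ≤ K) :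
    pq_size (key := sum_dist query) (knn K k tree bb query pq) =
      min K (data.length + pq_size (key := sum_dist query) pq) :=
  lengthSaturates_knn hc bb query pq hsz

theorem knn_search_build_size_gen (tree : kdtree) (bb : bbox) (K k : Nat)
    (data : List datapt) (query : datapt)
    (pq : priqueue datapt (sum_dist query)) (lst : List datapt)
    (hpriq : priq (sum_dist query) pq)
    (habs : PQAbs (sum_dist query) pq lst)
    (hc : Contents_kdtree tree data)
    (hsz : pq_size (key := sum_dist query) pq ≤ K) :
    pq_size (key := sum_dist query) (knn K k tree bb query pq) =
      min K (data.length + pq_size (key := sum_dist query) pq) :=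
  knn_search_build_size_gen_general tree bb K k data query pq hc hsz
end
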